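/- arXiv:2112.08705 — 4 statements merged into one kernel-verified Lean document; each statement's English description precedes it below -/
import Mathlib

section
/- Let K be a finite field, let b ≥ 1, and let f, g ∈ K[X] be polynomials each of natural degree exactly b. Then the kernels of the linear maps Φ_f and Φ_g have trivial intersection (ker Φ_f ⊓ ker Φ_g = ⊥ as submodules of Fin (2b) → K) if and only if f and g are coprime (IsCoprime f g). -/
/-- The linear map determined by the linear recurring sequence with feedback
polynomial `p` (of natural degree at most `b`):
`(Phi b p x) i = ∑_{j=0}^{b} (coeff of X^j in p) * x (i + j)`. -/
noncomputable def Phi {K : Type*} [Field K] (b : ℕ) (p : Polynomial K) :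
    (Fin (2 * b) → K) →ₗ[K] (Fin b → K) where
  toFun x i := ∑ j : Fin (b + 1),
    p.coeff j * x ⟨i.1 + j.1, by have h1 := i.2; have h2 := j.2; omega⟩
  map_add' x y := by
    funext i
    simp [mul_add, Finset.sum_add_distrib]
  map_smul' c x := by
    funext i
    simp only [Pi.smul_apply, smul_eq_mul, RingHom.id_apply, Finset.mul_sum]
    exact Finset.sum_congr rfl fun j _ => by ring

/-! Pair a sequence `x : Fin n → K` with polynomials by `⟪q, x⟫ = ∑ k, x k * q.coeff k`; then
`Phi b p x i = ⟪X ^ i * p, x⟫`, so `x` lies in the kernel of `Phi b p` exactly when it annihilates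
the multiples `u * p` with `deg u < b`. If `f` and `g` are coprime, the Sylvester map is surjective,
so every `X ^ k` with `k < 2b` is `r * f + s * g` with `deg r, deg s < b`, forcing `x k = 0`.
Otherwise `f` and `g` share a monic irreducible factor `d`, and the moment sequence
`k ↦ ℓ (X ^ k)` of the functional `ℓ q = coeff (q %ₘ d) (deg d - 1)` is a nonzero element of both
kernels. -/

open Polynomial

section Pairing

variable {K : Type*} [Field K]

noncomputable def seqPairing {n : ℕ} (x : Fin n → K) : K[X] →ₗ[K] K :=
  ∑ k : Fin n, x k • lcoeff K k

theorem seqPairing_apply {n : ℕ} (x : Fin n → K) (q : K[X]) :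
    seqPairing x q = ∑ k : Fin n, x k * q.coeff k := by
  simp [seqPairing]

theorem seqPairing_X_pow {n : ℕ} (x : Fin n → K) (k : Fin n) :
    seqPairing x (X ^ (k : ℕ)) = x k := by
  simp [seqPairing_apply, coeff_X_pow, Fin.val_eq_val]

theorem Phi_apply_eq_seqPairing {b : ℕ} {p : K[X]} (hp : p.natDegree ≤ b)
    (x : Fin (2 * b) → K) (i : Fin b) :
    Phi b p x i = seqPairing x (X ^ (i : ℕ) * p) := by
  have hsum : X ^ (i : ℕ) * p = ∑ j : Fin (b + 1), p.coeff j • X ^ ((i : ℕ) + j) := by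
    conv_lhs => rw [p.as_sum_range' (b + 1) (by omega), Finset.mul_sum,
      ← Fin.sum_univ_eq_sum_range (fun j => X ^ (i : ℕ) * monomial j (p.coeff j))]
    refine Finset.sum_congr rfl fun j _ => ?_
    rw [← C_mul_X_pow_eq_monomial, smul_eq_C_mul, pow_add]
    ring
  simp only [Phi, LinearMap.coe_mk, AddHom.coe_mk]
  rw [hsum, map_sum]
  refine Finset.sum_congr rfl fun j _ => ?_
  rw [map_smul, smul_eq_mul]
  exact congrArg _ (seqPairing_X_pow x ⟨i + j, by omega⟩).symm

theorem seqPairing_mul_eq_zero_of_mem_ker {b : ℕ} {p : K[X]} (hp : p.natDegree ≤ b)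
    {x : Fin (2 * b) → K} (hx : x ∈ LinearMap.ker (Phi b p)) {u : K[X]}
    (hu : u ∈ degreeLT K b) : seqPairing x (u * p) = 0 := by
  classical
  rw [degreeLT_eq_span_X_pow] at hu
  induction hu using Submodule.span_induction with
  | mem v hv =>
    obtain ⟨i, hi, rfl⟩ : ∃ i < b, X ^ i = v := by simpa using hv
    rw [← Phi_apply_eq_seqPairing hp x ⟨i, hi⟩, LinearMap.mem_ker.1 hx, Pi.zero_apply]
  | zero => simp
  | add v w _ _ hv hw => rw [add_mul, map_add, hv, hw, add_zero]
  | smul c v _ hv => rw [smul_mul_assoc, map_smul, hv, smul_zero]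

theorem seqPairing_moments {n : ℕ} (ℓ : K[X] →ₗ[K] K) {q : K[X]} (hq : q ∈ degreeLT K n) :
    seqPairing (fun k : Fin n => ℓ (X ^ (k : ℕ))) q = ℓ q := by
  classical
  rw [degreeLT_eq_span_X_pow] at hq
  induction hq using Submodule.span_induction with
  | mem v hv =>
    obtain ⟨i, hi, rfl⟩ : ∃ i < n, X ^ i = v := by simpa using hv
    exact seqPairing_X_pow _ ⟨i, hi⟩
  | zero => simp
  | add v w _ _ hv hw => rw [map_add, map_add, hv, hw]
  | smul c v _ hv => rw [map_smul, map_smul, hv]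

theorem Phi_moments_eq_zero {b : ℕ} {p : K[X]} (hp : p.natDegree ≤ b) (ℓ : K[X] →ₗ[K] K)
    (hℓ : ∀ q, p ∣ q → ℓ q = 0) : Phi b p (fun k => ℓ (X ^ (k : ℕ))) = 0 := by
  funext i
  have hdeg : X ^ (i : ℕ) * p ∈ degreeLT K (2 * b) := by
    rw [mem_degreeLT]
    refine (degree_le_natDegree.trans (Nat.cast_le.2 (natDegree_mul_le.trans ?_))).trans_lt
      (Nat.cast_lt.2 (show (i : ℕ) + b < 2 * b by omega))
    rw [natDegree_X_pow]
    omega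
  rw [Phi_apply_eq_seqPairing hp, seqPairing_moments ℓ hdeg, hℓ _ (dvd_mul_left p _),
    Pi.zero_apply]

end Pairing

theorem Polynomial.Monic.exists_linearMap_eq_zero_of_dvd {K : Type*} [Field K] {d : K[X]}
    (hd : d.Monic) (hd0 : 0 < d.natDegree) :
    ∃ ℓ : K[X] →ₗ[K] K, (∀ q, d ∣ q → ℓ q = 0) ∧ ℓ (X ^ (d.natDegree - 1)) = 1 := by
  refine ⟨lcoeff K (d.natDegree - 1) ∘ₗ modByMonicHom d, fun q hq => ?_, ?_⟩
  · simp [(modByMonic_eq_zero_iff_dvd hd).2 hq]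
  · have : X ^ (d.natDegree - 1) %ₘ d = X ^ (d.natDegree - 1) := by
      rw [modByMonic_eq_self_iff hd, degree_X_pow, degree_eq_natDegree hd.ne_zero]
      exact_mod_cast Nat.sub_lt hd0 one_pos
    simp [this]

theorem Polynomial.sylvesterMap_surjective_of_isCoprime {K : Type*} [Field K] {f g : K[X]}
    (hfg : IsCoprime f g) : Function.Surjective (sylvesterMap f g le_rfl le_rfl) := fun y =>
  ⟨adjSylvester f g ((resultant f g)⁻¹ • y), by
    rw [← LinearMap.comp_apply, sylveserMap_comp_adjSylvester, LinearMap.smul_apply,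
      LinearMap.id_apply, smul_smul, mul_inv_cancel₀ (resultant_ne_zero f g hfg), one_smul]⟩

theorem Polynomial.exists_mul_add_mul_eq_of_isCoprime {K : Type*} [Field K] {f g h : K[X]}
    (hfg : IsCoprime f g) (hh : h ∈ degreeLT K (f.natDegree + g.natDegree)) :
    ∃ p ∈ degreeLT K g.natDegree, ∃ q ∈ degreeLT K f.natDegree, f * p + g * q = h := by
  obtain ⟨⟨q, p⟩, hpq⟩ := sylvesterMap_surjective_of_isCoprime hfg ⟨h, hh⟩
  exact ⟨p, p.2, q, q.2, congrArg Subtype.val hpq⟩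

theorem lrs_kernels_trivial_inter_iff_isCoprime_general
    {K : Type*} [Field K] (b : ℕ) (hb : 1 ≤ b)
    (f g : Polynomial K) (hf : f.natDegree = b) (hg : g.natDegree = b) :
    LinearMap.ker (Phi b f) ⊓ LinearMap.ker (Phi b g) = ⊥ ↔ IsCoprime f g := by
  have hf0 : f ≠ 0 := by rintro rfl; rw [natDegree_zero] at hf; omega
  constructor
  · intro h
    by_contra hfg
    classical
    obtain ⟨d, hd, hdirr, hdgcd⟩ := exists_monic_irreducible_factor _
      (mt EuclideanDomain.gcd_isUnit_iff.1 hfg)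
    have hdf := hdgcd.trans (EuclideanDomain.gcd_dvd_left f g)
    have hdg := hdgcd.trans (EuclideanDomain.gcd_dvd_right f g)
    have hd0 := hdirr.natDegree_pos
    have hdb : d.natDegree ≤ b := hf ▸ natDegree_le_of_dvd hdf hf0
    obtain ⟨ℓ, hℓ, hℓ1⟩ := hd.exists_linearMap_eq_zero_of_dvd hd0
    have hmem : (fun k : Fin (2 * b) => ℓ (X ^ (k : ℕ))) ∈
        LinearMap.ker (Phi b f) ⊓ LinearMap.ker (Phi b g) :=
      ⟨Phi_moments_eq_zero hf.le ℓ fun q hq => hℓ q (hdf.trans hq),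
        Phi_moments_eq_zero hg.le ℓ fun q hq => hℓ q (hdg.trans hq)⟩
    have hx0 := congr_fun ((Submodule.eq_bot_iff _).1 h _ hmem) ⟨d.natDegree - 1, by omega⟩
    simp [hℓ1] at hx0
  · intro hfg
    rw [Submodule.eq_bot_iff]
    rintro x ⟨hxf, hxg⟩
    funext k
    have hX : X ^ (k : ℕ) ∈ degreeLT K (f.natDegree + g.natDegree) := by
      rw [mem_degreeLT, degree_X_pow, hf, hg]
      exact_mod_cast (show (k : ℕ) < b + b by omega)
    obtain ⟨p, hp, q, hq, hpq⟩ := exists_mul_add_mul_eq_of_isCoprime hfg hX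
    rw [hg] at hp
    rw [hf] at hq
    rw [Pi.zero_apply, ← seqPairing_X_pow x k, ← hpq, map_add, mul_comm f, mul_comm g,
      seqPairing_mul_eq_zero_of_mem_ker hf.le hxf hp,
      seqPairing_mul_eq_zero_of_mem_ker hg.le hxg hq, add_zero]

/-- The kernels of the LRS linear maps of `f` and `g` (both of natural degree
exactly `b ≥ 1` over a finite field `K`) have trivial intersection iff
`f` and `g` are coprime. -/
theorem lrs_kernels_trivial_inter_iff_isCoprime
    {K : Type*} [Field K] [Fintype K] (b : ℕ) (hb : 1 ≤ b)
    (f g : Polynomial K) (hf : f.natDegree = b) (hg : g.natDegree = b) :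
    LinearMap.ker (Phi b f) ⊓ LinearMap.ker (Phi b g) = ⊥ ↔ IsCoprime f g :=
  lrs_kernels_trivial_inter_iff_isCoprime_general b hb f g hf hg
end

section
/- Let K be a field, let b ≥ 1, and let p ∈ K[X] be a nonzero polynomial with natural degree at most b. Then the linear map Φ_p : (Fin (2b) → K) → (Fin b → K) is surjective; consequently its kernel is a K-subspace of (Fin (2b) → K) of dimension exactly b (Module.finrank K (ker Φ_p) = b). -/
/-! With `c = p.coeff` and `d = p.natDegree`, the equation `Phi b p x = y` is the recurrence
`∑_{j ≤ d} c j * x (n + j) = y n`. Its top coefficient `c d` is the leading coefficient of `p`,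
hence invertible, so the recurrence can be solved for `x (n + d)` term by term from arbitrary
(here zero) initial values. Thus `Phi b p` is onto, and rank–nullity gives the kernel dimension
`2b - b = b`. -/

open Finset

section InhomogeneousRecurrence

variable {R : Type*} [DivisionRing R]

noncomputable def recurrenceSolution (c : ℕ → R) (d : ℕ) (y : ℕ → R) : ℕ → R
  | n =>
    if n < d then 0
    else (c d)⁻¹ * (y (n - d) - ∑ j : Fin d, c j * recurrenceSolution c d y (n - d + j))
  termination_by n => n
  decreasing_by have := j.2; omega

theorem sum_mul_recurrenceSolution {c : ℕ → R} {d : ℕ} (hc : c d ≠ 0) (y : ℕ → R) (n : ℕ) :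
    ∑ j ∈ range (d + 1), c j * recurrenceSolution c d y (n + j) = y n := by
  rw [sum_range_succ, ← Fin.sum_univ_eq_sum_range (fun j => c j * recurrenceSolution c d y (n + j)),
    recurrenceSolution, if_neg (by omega), Nat.add_sub_cancel, mul_inv_cancel_left₀ hc]
  abel

end InhomogeneousRecurrence

theorem Polynomial.sum_range_coeff_mul_of_natDegree_le {R : Type*} [Semiring R] {p : Polynomial R}
    {b : ℕ} (hd : p.natDegree ≤ b) (f : ℕ → R) :
    ∑ j ∈ range (b + 1), p.coeff j * f j = ∑ j ∈ range (p.natDegree + 1), p.coeff j * f j := by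
  rw [← p.sum_over_range' (f := fun j a => a * f j) (by simp) (b + 1) (by omega),
    p.sum_over_range (by simp)]

theorem Phi_surjective {K : Type*} [Field K] (b : ℕ) {p : Polynomial K} (hp : p ≠ 0)
    (hd : p.natDegree ≤ b) : Function.Surjective (Phi b p) := by
  intro y
  let y' : ℕ → K := fun n => if h : n < b then y ⟨n, h⟩ else 0
  let x := recurrenceSolution p.coeff p.natDegree y'
  refine ⟨fun i => x i, funext fun i => ?_⟩
  have hsol := sum_mul_recurrenceSolution (Polynomial.leadingCoeff_ne_zero.mpr hp) y' i
  calc Phi b p (fun i => x i) i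
      = ∑ j ∈ range (b + 1), p.coeff j * x (i + j) :=
        Fin.sum_univ_eq_sum_range (fun j => p.coeff j * x (i + j)) (b + 1)
    _ = y i := by
        rw [Polynomial.sum_range_coeff_mul_of_natDegree_le hd, hsol]
        exact dif_pos i.2

theorem lrs_map_surjective_and_ker_finrank_general
    {K : Type*} [Field K] (b : ℕ)
    (p : Polynomial K) (hp : p ≠ 0) (hd : p.natDegree ≤ b) :
    Function.Surjective (Phi b p) ∧
      Module.finrank K (LinearMap.ker (Phi b p)) = b := by
  have hsurj := Phi_surjective b hp hd
  refine ⟨hsurj, ?_⟩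
  have hrank := LinearMap.finrank_range_add_finrank_ker (Phi b p)
  rw [LinearMap.range_eq_top.mpr hsurj, finrank_top, Module.finrank_fin_fun,
    Module.finrank_fin_fun] at hrank
  omega

/-- For a nonzero polynomial `p` of natural degree at most `b ≥ 1`, the LRS
linear map `Phi b p` is surjective, and its kernel has dimension exactly `b`. -/
theorem lrs_map_surjective_and_ker_finrank
    {K : Type*} [Field K] (b : ℕ) (hb : 1 ≤ b)
    (p : Polynomial K) (hp : p ≠ 0) (hd : p.natDegree ≤ b) :
    Function.Surjective (Phi b p) ∧
      Module.finrank K (LinearMap.ker (Phi b p)) = b :=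
  lrs_map_surjective_and_ker_finrank_general b p hp hd
end

section
/- Let l, b ≥ 1, let m = l·b, let F = GaloisField 2 l, and let t = 2^{m−1}. Suppose p : Fin t → F[X] is a family of polynomials such that each p i has natural degree exactly b and IsCoprime (p i) (p j) whenever i ≠ j. Define f : (Fin (2b) → F) → ZMod 2 by f(x) = 1 if and only if x ≠ 0 and Φ_{p i}(x) = 0 for some i (and f(x) = 0 otherwise). Then f is bent: for every a : Fin (2b) → F, (W_f(a))² = 2^{2m}. (This is the PS⁻ case of the LRS construction: the support of f is the union of the kernels of the Φ_{p i} minus the origin.) -/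
noncomputable instance (l : ℕ) : Fintype (GaloisField 2 l) := Fintype.ofFinite _

open Finset Polynomial Module LinearMap

def signChar : AddChar (ZMod 2) ℤ where
  toFun c := if c = 0 then 1 else -1
  map_zero_eq_one' := rfl
  map_add_eq_mul' := by decide

lemma AddChar.sum_addSubgroup {V R : Type*} [AddGroup V] [Fintype V] [CommRing R] [IsDomain R]
    [DecidableEq R] (H : AddSubgroup V) [DecidablePred (· ∈ H)] (ψ : AddChar V R) :
    ∑ x with x ∈ H, ψ x = if ∀ x ∈ H, ψ x = 1 then (Nat.card H : R) else 0 := by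
  rw [sum_subtype (p := (· ∈ H)) _ (fun x => by simp) ψ]
  have h := (ψ.compAddMonoidHom H.subtype).sum_eq_ite
  simp only [AddChar.compAddMonoidHom_apply, AddSubgroup.coe_subtype, AddChar.eq_zero_iff,
    Subtype.forall] at h
  rw [h, Nat.card_eq_fintype_card]

lemma AddSubgroup.sup_eq_top_of_disjoint {V : Type*} [AddCommGroup V] [Finite V]
    {H K : AddSubgroup V} (hHK : Disjoint H K) (hcard : Nat.card H * Nat.card K = Nat.card V) :
    H ⊔ K = ⊤ := by
  have hbij := (Nat.bijective_iff_injective_and_card _).mpr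
    ⟨AddSubgroup.add_injective_of_disjoint hHK, (Nat.card_prod H K).trans hcard⟩
  refine eq_top_iff.mpr fun v _ => ?_
  obtain ⟨⟨h, k⟩, rfl⟩ := hbij.2 v
  exact add_mem (AddSubgroup.mem_sup_left h.2) (AddSubgroup.mem_sup_right k.2)

section Walsh

variable {V ι : Type*} [AddCommGroup V] [Fintype V]

def walsh (f : V → ZMod 2) (ψ : AddChar V ℤ) : ℤ := ∑ x, signChar (f x) * ψ x

lemma walsh_eq_sum_sub_sum_support (f : V → ZMod 2) (ψ : AddChar V ℤ) :
    walsh f ψ = ∑ x, ψ x - 2 * ∑ x with f x = 1, ψ x := by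
  have hsign : ∀ c : ZMod 2, signChar c = 1 - 2 * if c = 1 then 1 else 0 := by decide
  simp only [walsh, hsign, sub_mul, one_mul, mul_assoc, ite_mul, zero_mul, sum_sub_distrib,
    ← mul_sum, sum_ite, sum_const_zero, add_zero]

variable [Fintype ι]

lemma sum_support_eq_sum_addSubgroup_sub_one (E : ι → AddSubgroup V)
    [∀ i, DecidablePred (· ∈ E i)] (hE : Pairwise fun i j => Disjoint (E i) (E j))
    {f : V → ZMod 2} (hf : ∀ x, f x = 1 ↔ x ≠ 0 ∧ ∃ i, x ∈ E i) (ψ : AddChar V ℤ) :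
    ∑ x with f x = 1, ψ x = ∑ i, (∑ x with x ∈ E i, ψ x - 1) := by
  classical
  have hsupp : ({x | f x = 1} : Finset V) =
      univ.biUnion fun i => ({x | x ∈ E i} : Finset V).erase 0 := by
    ext x
    simp [hf, and_comm]
  have hdisj : ((univ : Finset ι) : Set ι).PairwiseDisjoint
      fun i => ({x | x ∈ E i} : Finset V).erase 0 := by
    intro i _ j _ hij
    simp only [Function.onFun, disjoint_left, mem_erase, mem_filter, mem_univ, true_and]
    exact fun x hxi hxj => hxi.1 (AddSubgroup.disjoint_def.mp (hE hij) hxi.2 hxj.2)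
  rw [hsupp, sum_biUnion hdisj]
  refine sum_congr rfl fun i _ => ?_
  rw [sum_erase_eq_sub (by simp [(E i).zero_mem]), AddChar.map_zero_eq_one]

theorem walsh_sq_eq_card_of_partialSpread (E : ι → AddSubgroup V) {s : ℕ}
    (hcard : ∀ i, Nat.card (E i) = s) (hE : Pairwise fun i j => Disjoint (E i) (E j))
    (hV : Fintype.card V = s ^ 2) (hι : 2 * Fintype.card ι = s) {f : V → ZMod 2}
    (hf : ∀ x, f x = 1 ↔ x ≠ 0 ∧ ∃ i, x ∈ E i) (ψ : AddChar V ℤ) :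
    walsh f ψ ^ 2 = Fintype.card V := by
  classical
  set N := #{i | ∀ x ∈ E i, ψ x = 1}
  have hW : walsh f ψ = ∑ x, ψ x - 2 * (s * N - Fintype.card ι) := by
    rw [walsh_eq_sum_sub_sum_support, sum_support_eq_sum_addSubgroup_sub_one E hE hf,
      sum_sub_distrib]
    simp only [AddChar.sum_addSubgroup, hcard, ← sum_filter, sum_const, nsmul_eq_mul, mul_comm,
      card_univ, mul_one, N]
  rcases eq_or_ne ψ 0 with rfl | hψ
  · have hN : N = Fintype.card ι := by simp [N]
    rw [hW, hN]
    simp only [AddChar.zero_apply, sum_const, card_univ, nsmul_eq_mul, mul_one, hV, ← hι]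
    push_cast
    ring
  · have hN : N ≤ 1 := by
      refine card_le_one.mpr fun i hi j hj => ?_
      by_contra hij
      have htop := AddSubgroup.sup_eq_top_of_disjoint (hE hij)
        (by rw [hcard, hcard, Nat.card_eq_fintype_card, hV, sq])
      refine hψ (AddChar.eq_zero_iff.mpr fun x => ?_)
      obtain ⟨y, hy, z, hz, rfl⟩ := AddSubgroup.mem_sup.mp (htop ▸ AddSubgroup.mem_top x)
      rw [AddChar.map_add_eq_mul, (mem_filter.mp hi).2 y hy, (mem_filter.mp hj).2 z hz, one_mul]
    rw [hW, AddChar.sum_eq_zero_iff_ne_zero.mpr hψ, hV, ← hι]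
    interval_cases N <;> push_cast <;> ring

end Walsh

section Kernels

variable {K : Type*} [Field K]

lemma Polynomial.resultant_ne_zero_of_natDegree_le {p q : K[X]} {b : ℕ} (hp : p.natDegree = b)
    (hq : q.natDegree ≤ b) (hpq : IsCoprime p q) : p.resultant q b b ≠ 0 := by
  subst hp
  obtain ⟨k, hk⟩ := Nat.exists_eq_add_of_le hq
  have h := resultant_add_right_deg p q p.natDegree q.natDegree k le_rfl
  rw [← hk] at h
  have hlead : p.coeff p.natDegree ^ k ≠ 0 := by
    rcases eq_or_ne p 0 with rfl | hp0
    · rw [natDegree_zero] at hk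
      simp [show k = 0 by omega]
    · exact pow_ne_zero _ (leadingCoeff_ne_zero.mpr hp0)
  rw [h]
  exact mul_ne_zero hlead (resultant_ne_zero p q hpq)

lemma Polynomial.sylvesterMap_surjective {p q : K[X]} {b : ℕ} (hp : p.natDegree = b)
    (hq : q.natDegree ≤ b) (hpq : IsCoprime p q) :
    Function.Surjective (sylvesterMap p q hp.le hq) := by
  intro P
  refine ⟨adjSylvester p q ((p.resultant q b b)⁻¹ • P), ?_⟩
  have := LinearMap.congr_fun (sylveserMap_comp_adjSylvester p q hp.le hq)
    ((p.resultant q b b)⁻¹ • P)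
  simpa [smul_smul, inv_mul_cancel₀ (resultant_ne_zero_of_natDegree_le hp hq hpq)] using this

noncomputable def coeffPairing {n : ℕ} (x : Fin n → K) : K[X] →ₗ[K] K :=
  ∑ k, x k • lcoeff K k

lemma coeffPairing_apply {n : ℕ} (x : Fin n → K) (P : K[X]) :
    coeffPairing x P = ∑ k, x k * P.coeff k := by
  simp [coeffPairing]

lemma coeffPairing_X_pow {n : ℕ} (x : Fin n → K) (k : Fin n) :
    coeffPairing x (X ^ (k : ℕ)) = x k := by
  simp [coeffPairing_apply, coeff_X_pow, Fin.val_inj]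

variable {b : ℕ}

lemma Phi_apply_eq_coeffPairing {p : K[X]} (hp : p.natDegree ≤ b) (x : Fin (2 * b) → K)
    (i : Fin b) : Phi b p x i = coeffPairing x (X ^ (i : ℕ) * p) := by
  rw [coeffPairing_apply]
  have he : Function.Injective fun j : Fin (b + 1) => (⟨i + j, by omega⟩ : Fin (2 * b)) :=
    fun j j' h => Fin.ext (by simpa using h)
  refine Fintype.sum_of_injective _ he _ _ (fun k hk => ?_) (fun j => ?_)
  · rw [coeff_X_pow_mul']
    split_ifs with hik
    · rw [coeff_eq_zero_of_natDegree_lt, mul_zero]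
      by_contra! hle
      exact hk ⟨⟨k - i, by omega⟩, Fin.ext (by dsimp only; omega)⟩
    · rw [mul_zero]
  · dsimp only
    rw [coeff_X_pow_mul', if_pos (by omega), Nat.add_sub_cancel_left, mul_comm]

lemma coeffPairing_mul_eq_zero {p u : K[X]} (hp : p.natDegree ≤ b) {x : Fin (2 * b) → K}
    (hx : Phi b p x = 0) (hu : u ∈ degreeLT K b) : coeffPairing x (p * u) = 0 := by
  classical
  suffices degreeLT K b ≤ ker (coeffPairing x ∘ₗ LinearMap.mulLeft K p) from this hu
  rw [degreeLT_eq_span_X_pow, Submodule.span_le]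
  intro P hP
  simp only [coe_image, coe_range, Set.mem_image, Set.mem_Iio] at hP
  obtain ⟨i, hi, rfl⟩ := hP
  simp [mul_comm p, ← Phi_apply_eq_coeffPairing hp x ⟨i, hi⟩, hx]

theorem disjoint_ker_Phi {p q : K[X]} (hp : p.natDegree = b) (hq : q.natDegree ≤ b)
    (hpq : IsCoprime p q) : Disjoint (ker (Phi b p)) (ker (Phi b q)) := by
  refine Submodule.disjoint_def.mpr fun x hxp hxq => funext fun k => ?_
  have hk : X ^ (k : ℕ) ∈ degreeLT K (b + b) := by
    rw [mem_degreeLT, degree_X_pow, ← two_mul]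
    exact_mod_cast k.2
  obtain ⟨⟨u, v⟩, huv⟩ := sylvesterMap_surjective hp hq hpq ⟨_, hk⟩
  have huv : p * (v : K[X]) + q * (u : K[X]) = X ^ (k : ℕ) := congrArg Subtype.val huv
  rw [Pi.zero_apply, ← coeffPairing_X_pow x k, ← huv, map_add,
    coeffPairing_mul_eq_zero hp.le hxp v.2, coeffPairing_mul_eq_zero hq hxq u.2, add_zero]

lemma le_finrank_ker_Phi (p : K[X]) : b ≤ finrank K (ker (Phi b p)) := by
  have hrank := (Phi b p).finrank_range_add_finrank_ker
  have hrange := Submodule.finrank_le (Phi b p).range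
  rw [finrank_fin_fun] at hrank hrange
  omega

theorem finrank_ker_Phi {p : K[X]} (hp : p.natDegree = b) : finrank K (ker (Phi b p)) = b := by
  have h := Submodule.finrank_add_finrank_le_of_disjoint
    (disjoint_ker_Phi hp (natDegree_one.trans_le b.zero_le) (isCoprime_one_right (x := p)))
  rw [finrank_fin_fun] at h
  have := le_finrank_ker_Phi (b := b) (1 : K[X])
  have := le_finrank_ker_Phi (b := b) p
  omega

end Kernels

/-- The PS⁻ case of the LRS construction: given `t = 2^(l*b - 1)` pairwise
coprime polynomials of natural degree exactly `b` over `F = GaloisField 2 l`,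
the Boolean function whose support is the union of the kernels of the
associated LRS linear maps minus the origin is bent: every Walsh–Hadamard
coefficient squares to `2^(2*m)` where `m = l*b`. -/
theorem lrs_psMinus_bent (l b : ℕ) (hl : 1 ≤ l) (hb : 1 ≤ b)
    (p : Fin (2 ^ (l * b - 1)) → Polynomial (GaloisField 2 l))
    (hdeg : ∀ i, (p i).natDegree = b)
    (hcop : ∀ i j, i ≠ j → IsCoprime (p i) (p j))
    (f : (Fin (2 * b) → GaloisField 2 l) → ZMod 2)
    (hf : ∀ x, f x = 1 ↔ (x ≠ 0 ∧ ∃ i, Phi b (p i) x = 0)) :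
    ∀ a : Fin (2 * b) → GaloisField 2 l,
      ((∑ x : Fin (2 * b) → GaloisField 2 l,
          (if f x = 0 then (1 : ℤ) else -1) *
            (if (∑ j, Algebra.trace (ZMod 2) (GaloisField 2 l) (a j * x j)) = 0
              then (1 : ℤ) else -1)) ^ 2) = 2 ^ (2 * (l * b)) := by
  intro a
  have hF : Nat.card (GaloisField 2 l) = 2 ^ l := GaloisField.card 2 l (by omega)
  have hι : 2 * Fintype.card (Fin (2 ^ (l * b - 1))) = 2 ^ (l * b) := by
    rw [Fintype.card_fin, ← pow_succ']
    congr 1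
    have := Nat.mul_pos hl hb
    omega
  have hker : ∀ i, Nat.card (ker (Phi b (p i))).toAddSubgroup = 2 ^ (l * b) := fun i => by
    change Nat.card (ker (Phi b (p i))) = _
    rw [Module.natCard_eq_pow_finrank (K := GaloisField 2 l), finrank_ker_Phi (hdeg i), hF,
      ← pow_mul]
  have hV : Fintype.card (Fin (2 * b) → GaloisField 2 l) = (2 ^ (l * b)) ^ 2 := by
    rw [Fintype.card_fun, Fintype.card_fin, ← Nat.card_eq_fintype_card, hF]
    ring
  have hdisj : Pairwise fun i j =>
      Disjoint (ker (Phi b (p i))).toAddSubgroup (ker (Phi b (p j))).toAddSubgroup :=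
    fun i j hij => AddSubgroup.disjoint_def.mpr fun hx hy =>
      Submodule.disjoint_def.mp (disjoint_ker_Phi (hdeg i) (hdeg j).le (hcop i j hij)) _ hx hy
  let ψ : AddChar (Fin (2 * b) → GaloisField 2 l) ℤ := signChar.compAddMonoidHom
    (AddMonoidHom.mk' (fun x => ∑ j, Algebra.trace (ZMod 2) (GaloisField 2 l) (a j * x j))
      fun x y => by simp [mul_add, Finset.sum_add_distrib])
  change walsh f ψ ^ 2 = _
  rw [walsh_sq_eq_card_of_partialSpread _ hker hdisj hV hι (f := f) (by simpa using hf) ψ, hV]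
  push_cast
  ring
end

section
/- Let l, b ≥ 1, let m = l·b, and let F = GaloisField 2 l. There exists a finite set S of polynomials over F with |S| = 2^{m−1} such that every p ∈ S is monic of natural degree b with nonzero constant term (p.coeff 0 ≠ 0), and any two distinct elements of S are coprime, if and only if b = 1 or b = 2. -/
/-!
Send each member of a pairwise coprime family to a monic irreducible factor: this is injective,
and a member that is not irreducible has such a factor of at most half its degree. A monic
irreducible `π ≠ X` of degree `d` divides `X ^ (q ^ d - 1) - 1`, so there are at most
`(q ^ d - 1) / d` of them, and at most `q ^ k - 1` of degree `≤ k`; hence a family of degree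
`b ≥ 3` has fewer than `q ^ b / 2` members. Conversely, for `b = 1` take the `X + a` with `a ≠ 0`,
and for `b = 2` the monic irreducible quadratics (at least `q ^ 2 - q (q + 1) / 2` of them, since
the reducible ones are indexed by `Sym2 F`) together with the squares `(X + a) ^ 2`, `a ≠ 0`.
Both families consist of prime powers of equal degree, hence are pairwise coprime.
-/

open Polynomial Finset

theorem two_mul_add_lt_pow {q b c s : ℕ} (hq : 2 ≤ q) (hb : 3 ≤ b) (hc : b * c ≤ q ^ b - 1)
    (hs : s ≤ q ^ (b / 2) - 1) : 2 * (s + c) < q ^ b := by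
  have hpos : 1 ≤ q ^ (b / 2) := Nat.one_le_pow _ _ (by omega)
  rcases (by omega : b = 3 ∨ 4 ≤ b) with rfl | hb4
  · have hq3 : 1 ≤ q ^ 3 := Nat.one_le_pow _ _ (by omega)
    simp only [Nat.reduceDiv, pow_one] at hs
    have : 6 * q < q ^ 3 + 8 := by
      obtain ⟨t, rfl⟩ := Nat.exists_eq_add_of_le hq
      ring_nf
      nlinarith
    omega
  · have hhalf : 4 * q ^ (b / 2) ≤ q ^ b := by
      calc 4 * q ^ (b / 2) ≤ q ^ 2 * q ^ (b / 2) := by gcongr; nlinarith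
        _ = q ^ (2 + b / 2) := by rw [pow_add]
        _ ≤ q ^ b := Nat.pow_le_pow_right (by omega) (by omega)
    have : 4 * c ≤ b * c := Nat.mul_le_mul_right _ hb4
    omega

namespace Polynomial

variable {F : Type*} [Field F]

theorem isCoprime_of_monic_of_isPrimePow {p p' : F[X]} (hp : p.Monic) (hp' : p'.Monic)
    (hdeg : p.natDegree = p'.natDegree) (hpp : IsPrimePow p) (hpp' : IsPrimePow p')
    (hne : p ≠ p') : IsCoprime p p' := by
  obtain ⟨π, n, hπ, hn, rfl⟩ := hpp
  obtain ⟨σ, m, hσ, -, rfl⟩ := hpp'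
  by_cases hπσ : Associated π σ
  · have hdegπ : π.natDegree = σ.natDegree :=
      natDegree_eq_of_degree_eq (degree_eq_degree_of_associated hπσ)
    rw [natDegree_pow, natDegree_pow, hdegπ] at hdeg
    have hnm : n = m := by
      have := hσ.irreducible.natDegree_pos
      rcases Nat.eq_zero_or_pos n with h | h
      · omega
      · exact Nat.eq_of_mul_eq_mul_right this hdeg
    subst hnm
    exact absurd (eq_of_monic_of_associated hp hp' (hπσ.pow_pow)) hne
  · refine IsCoprime.pow ((hπ.irreducible.coprime_iff_not_dvd).2 fun h => hπσ ?_)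
    exact hπ.associated_of_dvd hσ h

theorem exists_monic_irreducible_dvd_eq_or_two_mul_natDegree_le {p : F[X]} (hp : p.Monic)
    (hdeg : 0 < p.natDegree) :
    ∃ π : F[X], π.Monic ∧ Irreducible π ∧ π ∣ p ∧ (π = p ∨ 2 * π.natDegree ≤ p.natDegree) := by
  by_cases hirr : Irreducible p
  · exact ⟨p, hp, hirr, dvd_rfl, .inl rfl⟩
  have hp1 : p ≠ 1 := by rintro rfl; simp at hdeg
  obtain ⟨f, g, -, hg, rfl, hgdeg⟩ : ∃ f g : F[X], f.Monic ∧ g.Monic ∧ f * g = p ∧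
      g.natDegree ∈ Ioc 0 (p.natDegree / 2) := by
    simpa [hp.irreducible_iff_natDegree', hp1] using hirr
  rw [mem_Ioc] at hgdeg
  obtain ⟨π, hπ, hπirr, hπg⟩ := exists_monic_irreducible_factor g
    fun hu => by simp [natDegree_eq_zero_of_isUnit hu] at hgdeg
  refine ⟨π, hπ, hπirr, hπg.trans (dvd_mul_left g f), .inr ?_⟩
  have := natDegree_le_of_dvd hπg hg.ne_zero
  omega

theorem isPrimePow_X_add_C (a : F) : IsPrimePow (X + C a) :=
  (irreducible_of_degree_eq_one (degree_X_add_C a)).prime.isPrimePow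

def IsCoprimeFamily (b : ℕ) (S : Finset F[X]) : Prop :=
  (∀ p ∈ S, p.Monic ∧ p.natDegree = b ∧ p.coeff 0 ≠ 0) ∧ (S : Set F[X]).Pairwise IsCoprime

theorem IsCoprimeFamily.exists_card_eq {b n : ℕ} {S : Finset F[X]} (hS : IsCoprimeFamily b S)
    (hn : n ≤ #S) : ∃ T : Finset F[X], #T = n ∧ IsCoprimeFamily b T := by
  obtain ⟨T, hTS, hT⟩ := exists_subset_card_eq hn
  exact ⟨T, hT, fun p hp => hS.1 p (hTS hp), hS.2.mono (coe_subset.2 hTS)⟩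

theorem isCoprimeFamily_of_isPrimePow {b : ℕ} {S : Finset F[X]}
    (hS : ∀ p ∈ S, p.Monic ∧ p.natDegree = b ∧ p.coeff 0 ≠ 0 ∧ IsPrimePow p) :
    IsCoprimeFamily b S := by
  refine ⟨fun p hp => ⟨(hS p hp).1, (hS p hp).2.1, (hS p hp).2.2.1⟩, fun p hp p' hp' hne => ?_⟩
  obtain ⟨hm, hdeg, -, hpp⟩ := hS p hp
  obtain ⟨hm', hdeg', -, hpp'⟩ := hS p' hp'
  exact isCoprime_of_monic_of_isPrimePow hm hm' (hdeg.trans hdeg'.symm) hpp hpp' hne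

variable [Fintype F]

theorem _root_.Irreducible.dvd_X_pow_card_pow_natDegree_sub_one_sub_one {π : F[X]}
    (hπ : Irreducible π) (h0 : π.coeff 0 ≠ 0) :
    π ∣ X ^ (Fintype.card F ^ π.natDegree - 1) - 1 := by
  have hdvd : π ∣ X ^ Fintype.card F ^ π.natDegree - X := by
    rw [← Nat.card_eq_fintype_card, ← hπ.natDegree_dvd_iff_dvd_X_pow_card_pow_sub_X]
  have hX : IsCoprime π X :=
    hπ.coprime_iff_not_dvd.2 fun h => h0 (X_dvd_iff.1 (hπ.dvd_symm irreducible_X h))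
  refine hX.dvd_of_dvd_mul_left ?_
  have hq : 0 < Fintype.card F ^ π.natDegree := pow_pos Fintype.card_pos _
  rwa [mul_sub, mul_one, ← pow_succ', Nat.sub_add_cancel hq]

theorem mul_card_le_card_pow_sub_one {T : Finset F[X]} {d : ℕ}
    (hT : ∀ π ∈ T, π.Monic ∧ Irreducible π ∧ π.natDegree = d ∧ π.coeff 0 ≠ 0) :
    d * #T ≤ Fintype.card F ^ d - 1 := by
  rcases Nat.eq_zero_or_pos d with rfl | hd
  · simp
  have hprod : ∏ π ∈ T, π ∣ X ^ (Fintype.card F ^ d - 1) - 1 := by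
    refine prod_dvd_of_coprime (fun π hπ π' hπ' hne => ?_) fun π hπ => ?_
    · obtain ⟨hm, hirr, hdeg, -⟩ := hT π hπ
      obtain ⟨hm', hirr', hdeg', -⟩ := hT π' hπ'
      exact isCoprime_of_monic_of_isPrimePow hm hm' (hdeg.trans hdeg'.symm)
        hirr.prime.isPrimePow hirr'.prime.isPrimePow hne
    · obtain ⟨-, hirr, rfl, h0⟩ := hT π hπ
      exact hirr.dvd_X_pow_card_pow_natDegree_sub_one_sub_one h0
  have hq : 1 ≤ Fintype.card F ^ d - 1 := by
    have : 2 ≤ Fintype.card F ^ d :=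
      Fintype.one_lt_card.trans_le (Nat.le_self_pow hd.ne' _)
    omega
  have hne : (X ^ (Fintype.card F ^ d - 1) - 1 : F[X]) ≠ 0 := by
    simpa using X_pow_sub_C_ne_zero (R := F) (by omega : 0 < Fintype.card F ^ d - 1) 1
  calc d * #T = (∏ π ∈ T, π).natDegree := by
        rw [natDegree_prod_of_monic _ _ fun π hπ => (hT π hπ).1,
          sum_congr rfl fun π hπ => (hT π hπ).2.2.1, sum_const, smul_eq_mul, mul_comm]
    _ ≤ (X ^ (Fintype.card F ^ d - 1) - 1 : F[X]).natDegree := natDegree_le_of_dvd hprod hne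
    _ = Fintype.card F ^ d - 1 := by rw [← C_1, natDegree_X_pow_sub_C]

theorem card_le_card_pow_sub_one {T : Finset F[X]} {k : ℕ}
    (hT : ∀ π ∈ T, π.Monic ∧ Irreducible π ∧ π.natDegree ≤ k ∧ π.coeff 0 ≠ 0) :
    #T ≤ Fintype.card F ^ k - 1 := by
  classical
  induction k generalizing T with
  | zero =>
    suffices T = ∅ by simp [this]
    refine eq_empty_of_forall_notMem fun π hπ => ?_
    have := (hT π hπ).2.1.natDegree_pos
    have := (hT π hπ).2.2.1
    omega
  | succ k ih =>
    have hlow := ih (T := T.filter (·.natDegree ≤ k)) fun π hπ => by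
      obtain ⟨hπ, hle⟩ := mem_filter.1 hπ
      obtain ⟨hm, hirr, -, h0⟩ := hT π hπ
      exact ⟨hm, hirr, hle, h0⟩
    have htop := mul_card_le_card_pow_sub_one (T := T.filter (¬ ·.natDegree ≤ k)) (d := k + 1)
      fun π hπ => by
        obtain ⟨hπ, hgt⟩ := mem_filter.1 hπ
        obtain ⟨hm, hirr, hle, h0⟩ := hT π hπ
        exact ⟨hm, hirr, by omega, h0⟩
    rw [← card_filter_add_card_filter_not (s := T) (·.natDegree ≤ k)]
    rcases Nat.eq_zero_or_pos k with rfl | hk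
    · simp only [pow_zero, pow_one, zero_add, one_mul, Nat.sub_self, Nat.le_zero] at hlow htop ⊢
      omega
    have hq : 2 * Fintype.card F ^ k ≤ Fintype.card F ^ (k + 1) := by
      rw [pow_succ']
      exact Nat.mul_le_mul_right _ Fintype.one_lt_card
    have : 2 * #(T.filter (¬ ·.natDegree ≤ k)) ≤ (k + 1) * #(T.filter (¬ ·.natDegree ≤ k)) :=
      Nat.mul_le_mul_right _ (by omega)
    omega

theorem IsCoprimeFamily.two_mul_card_lt {b : ℕ} {S : Finset F[X]} (hS : IsCoprimeFamily b S)
    (hb : 3 ≤ b) : 2 * #S < Fintype.card F ^ b := by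
  classical
  obtain ⟨hmem, hcop⟩ := hS
  choose! g hg using fun p (hp : p ∈ S) =>
    exists_monic_irreducible_dvd_eq_or_two_mul_natDegree_le (hmem p hp).1
      (by rw [(hmem p hp).2.1]; omega)
  have hinj : Set.InjOn g S := fun p hp p' hp' he => by
    by_contra hne
    obtain ⟨-, hirr, hdvd, -⟩ := hg p hp
    exact hirr.not_isUnit ((hcop hp hp' hne).isUnit_of_dvd' hdvd (he ▸ (hg p' hp').2.2.1))
  have hT : ∀ π ∈ S.image g, π.Monic ∧ Irreducible π ∧ π.coeff 0 ≠ 0 ∧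
      (π.natDegree = b ∨ π.natDegree ≤ b / 2) := by
    simp only [mem_image, forall_exists_index, and_imp]
    rintro _ p hp rfl
    obtain ⟨hm, hirr, hdvd, hsmall⟩ := hg p hp
    obtain ⟨hpm, hpdeg, hp0⟩ := hmem p hp
    refine ⟨hm, hirr, fun h0 => hp0 (X_dvd_iff.1 ((X_dvd_iff.2 h0).trans hdvd)), ?_⟩
    rcases hsmall with h | h
    · exact .inl (by rw [h, hpdeg])
    · exact .inr (by omega)
  rw [← card_image_of_injOn hinj, ← card_filter_add_card_filter_not (·.natDegree ≤ b / 2)]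
  refine two_mul_add_lt_pow Fintype.one_lt_card hb ?_ ?_
  · refine mul_card_le_card_pow_sub_one fun π hπ => ?_
    obtain ⟨hπ, hgt⟩ := mem_filter.1 hπ
    obtain ⟨hm, hirr, h0, hdeg⟩ := hT π hπ
    exact ⟨hm, hirr, by omega, h0⟩
  · refine card_le_card_pow_sub_one fun π hπ => ?_
    obtain ⟨hπ, hle⟩ := mem_filter.1 hπ
    obtain ⟨hm, hirr, h0, -⟩ := hT π hπ
    exact ⟨hm, hirr, hle, h0⟩

theorem exists_isCoprimeFamily_one :
    ∃ S : Finset F[X], IsCoprimeFamily 1 S ∧ #S = Fintype.card F - 1 := by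
  classical
  have hinj : Function.Injective fun a : F => X + C a := fun a a' h => by
    simpa using congrArg (coeff · 0) h
  refine ⟨(univ.erase 0).image (X + C ·), isCoprimeFamily_of_isPrimePow ?_, ?_⟩
  · simp only [mem_image, mem_erase, mem_univ, and_true, forall_exists_index, and_imp]
    rintro _ a ha rfl
    exact ⟨monic_X_add_C a, natDegree_X_add_C a, by simpa using ha, isPrimePow_X_add_C a⟩
  · simp [card_image_of_injective _ hinj]

theorem exists_isCoprimeFamily_two :
    ∃ S : Finset F[X], IsCoprimeFamily 2 S ∧ Fintype.card F ^ 2 ≤ 2 * #S := by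
  classical
  set q := Fintype.card F
  have hquad : Function.Injective fun c : F × F => X ^ 2 + C c.1 * X + C c.2 := fun c c' h => by
    have h1 : c.1 = c'.1 := by simpa using congrArg (coeff · 1) h
    have h0 : c.2 = c'.2 := by simpa using congrArg (coeff · 0) h
    exact Prod.ext h1 h0
  have hsq : Function.Injective fun a : F => (X + C a) ^ 2 := fun a a' h => by
    have h' : 0 = (-a + a') ^ 2 := by simpa using congrArg (eval (-a)) h
    exact neg_add_eq_zero.1 ((pow_eq_zero_iff two_ne_zero).1 h'.symm)
  set M := (univ : Finset (F × F)).image fun c => X ^ 2 + C c.1 * X + C c.2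
  set R := (univ : Finset (Sym2 F)).image
    (Sym2.lift ⟨fun a b => (X + C a) * (X + C b), fun a b => mul_comm _ _⟩)
  set Sq := (univ.erase 0).image fun a : F => (X + C a) ^ 2
  have hR : ∀ a b : F, (X + C a) * (X + C b) ∈ R := fun a b =>
    mem_image.2 ⟨s(a, b), mem_univ _, rfl⟩
  have hSqR : Sq ⊆ R := by
    simp only [Sq, subset_iff, mem_image]
    rintro _ ⟨a, -, rfl⟩
    simpa [pow_two] using hR a a
  refine ⟨(M \ R) ∪ Sq, isCoprimeFamily_of_isPrimePow ?_, ?_⟩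
  · intro p hp
    rcases mem_union.1 hp with hp | hp
    · obtain ⟨hpM, hpR⟩ := mem_sdiff.1 hp
      obtain ⟨⟨a, c⟩, -, rfl⟩ := mem_image.1 hpM
      have hm : (X ^ 2 + C a * X + C c).Monic := by monicity!
      have hdeg : (X ^ 2 + C a * X + C c).natDegree = 2 := by compute_degree!
      have hsplit : ∀ c₁ c₂, c = c₁ * c₂ → a = c₁ + c₂ → X ^ 2 + C a * X + C c ∈ R := by
        rintro c₁ c₂ rfl rfl
        convert hR c₁ c₂ using 1
        simp only [C_add, C_mul]
        ring
      refine ⟨hm, hdeg, fun h0 => hpR (hsplit a 0 (by simpa using h0) (by simp)), ?_⟩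
      refine Irreducible.prime ?_ |>.isPrimePow
      by_contra hirr
      obtain ⟨c₁, c₂, h0, h1⟩ := (hm.not_irreducible_iff_exists_add_mul_eq_coeff hdeg).1 hirr
      exact hpR (hsplit c₁ c₂ (by simpa using h0) (by simpa using h1))
    · obtain ⟨a, ha, rfl⟩ := mem_image.1 hp
      exact ⟨(monic_X_add_C a).pow 2, by simp,
        by simpa [coeff_zero_eq_eval_zero] using (mem_erase.1 ha).1,
        (isPrimePow_X_add_C a).pow two_ne_zero⟩
  · have hRcard : 2 * #R ≤ q ^ 2 + q := by
      calc 2 * #R ≤ 2 * (q + 1).choose 2 := by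
            gcongr; exact card_image_le.trans_eq (by rw [card_univ, Sym2.card])
        _ ≤ (q + 1) * q := by rw [Nat.choose_two_right]; exact Nat.mul_div_le _ _
        _ = q ^ 2 + q := by ring
    have hMR := le_card_sdiff R M
    have hM : #M = q ^ 2 := by
      rw [card_image_of_injective _ hquad, card_univ, Fintype.card_prod, pow_two]
    have hSq : #Sq = q - 1 := by simp [Sq, q, card_image_of_injective _ hsq]
    have hq : 2 ≤ q := Fintype.one_lt_card
    rw [card_union_of_disjoint (disjoint_sdiff_self_left.mono_right hSqR)]
    omega

end Polynomial

/-- Over `F = GaloisField 2 l` (with `m = l*b`), a family of `2^(m-1)` pairwise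
coprime monic polynomials of natural degree `b` with nonzero constant term
exists iff `b = 1` or `b = 2`. -/
theorem exists_coprime_family_iff_deg_one_or_two (l b : ℕ) (hl : 1 ≤ l) (hb : 1 ≤ b) :
    (∃ S : Finset (Polynomial (GaloisField 2 l)),
        S.card = 2 ^ (l * b - 1) ∧
        (∀ p ∈ S, p.Monic ∧ p.natDegree = b ∧ p.coeff 0 ≠ 0) ∧
        (∀ p ∈ S, ∀ q ∈ S, p ≠ q → IsCoprime p q)) ↔
      b = 1 ∨ b = 2 := by
  let _ : Fintype (GaloisField 2 l) := Fintype.ofFinite _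
  have hpow : ∀ b, 1 ≤ b → 2 * 2 ^ (l * b - 1) = Fintype.card (GaloisField 2 l) ^ b := by
    intro b hb
    rw [Fintype.card_eq_nat_card, GaloisField.card 2 l (by omega), ← pow_mul, ← pow_succ']
    congr 1
    have := Nat.mul_le_mul hl hb
    omega
  constructor
  · rintro ⟨S, hcard, hS⟩
    by_contra! hb'
    have hlt := IsCoprimeFamily.two_mul_card_lt hS (by omega)
    rw [hcard, hpow b hb] at hlt
    exact lt_irrefl _ hlt
  · rintro (rfl | rfl)
    · obtain ⟨S, hS, hcard⟩ := exists_isCoprimeFamily_one (F := GaloisField 2 l)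
      have := pow_one (Fintype.card (GaloisField 2 l)) ▸ hpow 1 le_rfl
      have := Nat.two_pow_pos (l * 1 - 1)
      exact hS.exists_card_eq (by omega)
    · obtain ⟨S, hS, hcard⟩ := exists_isCoprimeFamily_two (F := GaloisField 2 l)
      have := hpow 2 one_le_two
      exact hS.exists_card_eq (by omega)
end
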